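/- arXiv:1812.06948 — 4 statements merged into one kernel-verified Lean document; each statement's English description precedes it below -/
import Mathlib

section
/- Let n be a positive integer, Φ an n×n real orthogonal matrix (ΦᵀΦ = ΦΦᵀ = I), D = diag(d) a diagonal matrix with nonnegative diagonal entries, R an n×n real symmetric positive definite matrix, and λ > 0. Let S_R = Φ(ΦᵀR⁻¹Φ + λD)⁻¹ΦᵀR⁻¹ and let S_I = Φ(ΦᵀΦ + λD)⁻¹Φᵀ = (I + λΦDΦᵀ)⁻¹ be the smoother with R replaced by the identity. Then S_R is invertible and R⁻¹(S_R⁻¹ − I) = λ Φ D Φᵀ = S_I⁻¹ − I. In particular the matrix R⁻¹(S_R⁻¹ − I) does not depend on R. -/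
open Matrix

/-- The scaling relation `R⁻¹(S_R⁻¹ − I) = λ Φ D Φᵀ = S_I⁻¹ − I`:
the prior precision matrix does not depend on the working correlation `R`. -/
theorem smoother_scaling_relation
    (n : ℕ) (hn : 0 < n)
    (Φ : Matrix (Fin n) (Fin n) ℝ)
    (hΦ₁ : Φᵀ * Φ = 1) (hΦ₂ : Φ * Φᵀ = 1)
    (d : Fin n → ℝ) (hd : ∀ i, 0 ≤ d i)
    (R : Matrix (Fin n) (Fin n) ℝ) (hR : R.PosDef)
    (lam : ℝ) (hlam : 0 < lam)
    (SR SI : Matrix (Fin n) (Fin n) ℝ)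
    (hSR : SR = Φ * (Φᵀ * R⁻¹ * Φ + lam • Matrix.diagonal d)⁻¹ * Φᵀ * R⁻¹)
    (hSI : SI = ((1 : Matrix (Fin n) (Fin n) ℝ) + lam • (Φ * Matrix.diagonal d * Φᵀ))⁻¹) :
    IsUnit SR ∧
    R⁻¹ * (SR⁻¹ - 1) = lam • (Φ * Matrix.diagonal d * Φᵀ) ∧
    R⁻¹ * (SR⁻¹ - 1) = SI⁻¹ - 1 := by
  -- notation
  set D : Matrix (Fin n) (Fin n) ℝ := Matrix.diagonal d with hD
  set X : Matrix (Fin n) (Fin n) ℝ := Φ * D * Φᵀ with hX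
  -- real conjTranspose = transpose
  have hct : ∀ A : Matrix (Fin n) (Fin n) ℝ, Aᴴ = Aᵀ := by
    intro A; ext i j; simp [Matrix.conjTranspose_apply]
  -- units
  have hΦu : IsUnit Φ := ⟨⟨Φ, Φᵀ, hΦ₂, hΦ₁⟩, rfl⟩
  have hΦtu : IsUnit Φᵀ := ⟨⟨Φᵀ, Φ, hΦ₁, hΦ₂⟩, rfl⟩
  have hΦinv : Φ⁻¹ = Φᵀ := Matrix.inv_eq_right_inv hΦ₂
  have hΦtinv : Φᵀ⁻¹ = Φ := Matrix.inv_eq_right_inv hΦ₁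
  have hRu : IsUnit R := hR.isUnit
  have hRiu : IsUnit R⁻¹ := hR.inv.isUnit
  -- lam • X = Φ * diagonal (lam • d) * Φᵀ
  have hXsmul : lam • X = Φ * Matrix.diagonal (lam • d) * Φᵀ := by
    rw [Matrix.diagonal_smul, hX, Matrix.mul_smul, Matrix.smul_mul]
  have hld : ∀ i, 0 ≤ (lam • d) i := fun i => by
    simpa using mul_nonneg hlam.le (hd i)
  have hXpsd : (lam • X).PosSemidef := by
    rw [hXsmul]
    have := (Matrix.posSemidef_diagonal_iff.mpr hld).mul_mul_conjTranspose_same Φ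
    rwa [hct] at this
  -- N := R⁻¹ + lam • X is PosDef
  have hN : (R⁻¹ + lam • X).PosDef := hR.inv.add_posSemidef hXpsd
  set N : Matrix (Fin n) (Fin n) ℝ := R⁻¹ + lam • X with hNdef
  have hNu : IsUnit N := hN.isUnit
  -- M = Φᵀ * N * Φ
  have hsand : Φᵀ * X * Φ = D := by
    rw [hX, ← Matrix.mul_assoc, ← Matrix.mul_assoc, hΦ₁, Matrix.one_mul,
      Matrix.mul_assoc, hΦ₁, Matrix.mul_one]
  set M : Matrix (Fin n) (Fin n) ℝ := Φᵀ * R⁻¹ * Φ + lam • D with hMdef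
  have hM : M = Φᵀ * N * Φ := by
    rw [hMdef, hNdef, Matrix.mul_add, Matrix.add_mul, Matrix.mul_smul, Matrix.smul_mul,
      hsand]
  have hMu : IsUnit M := by
    rw [hM]; exact (hΦtu.mul hNu).mul hΦu
  have hMinvu : IsUnit M⁻¹ := (Matrix.isUnit_nonsing_inv_iff).mpr hMu
  -- SR is a unit
  have hSRu : IsUnit SR := by
    rw [hSR]; exact ((hΦu.mul hMinvu).mul hΦtu).mul hRiu
  have hMinv : M⁻¹⁻¹ = M :=
    Matrix.nonsing_inv_nonsing_inv _ ((Matrix.isUnit_iff_isUnit_det _).mp hMu)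
  have hRinv : R⁻¹⁻¹ = R :=
    Matrix.nonsing_inv_nonsing_inv _ ((Matrix.isUnit_iff_isUnit_det _).mp hRu)
  -- SR⁻¹ = R * Φ * M * Φᵀ
  have hSRinv : SR⁻¹ = R * (Φ * M * Φᵀ) := by
    rw [hSR, Matrix.mul_inv_rev, Matrix.mul_inv_rev, Matrix.mul_inv_rev,
      hRinv, hΦinv, hΦtinv, hMinv]
    simp [Matrix.mul_assoc]
  -- Φ * M * Φᵀ = N
  have hΦMΦ : Φ * M * Φᵀ = N := by
    rw [hM, ← Matrix.mul_assoc, ← Matrix.mul_assoc, hΦ₂, Matrix.one_mul,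
      Matrix.mul_assoc, hΦ₂, Matrix.mul_one]
  -- main computation
  have key : R⁻¹ * (SR⁻¹ - 1) = lam • X := by
    rw [hSRinv, hΦMΦ, Matrix.mul_sub, Matrix.mul_one, ← Matrix.mul_assoc,
      Matrix.nonsing_inv_mul R ((Matrix.isUnit_iff_isUnit_det _).mp hRu),
      Matrix.one_mul, hNdef, add_sub_cancel_left]
  -- SI part
  have hN' : ((1 : Matrix (Fin n) (Fin n) ℝ) + lam • X).PosDef :=
    Matrix.PosDef.add_posSemidef Matrix.PosDef.one hXpsd
  have hSIinv : SI⁻¹ = 1 + lam • X := by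
    rw [hSI, Matrix.nonsing_inv_nonsing_inv _ ((Matrix.isUnit_iff_isUnit_det _).mp hN'.isUnit)]
  refine ⟨hSRu, key, ?_⟩
  rw [key, hSIinv, add_sub_cancel_left]
end

section
/- Let n be a positive integer, Φ an n×n real orthogonal matrix, c : Fin n → ℝ with c i > 0 for all i, R an n×n real symmetric positive definite matrix and λ ≥ 0. For q ∈ ℝ define D(q) = diag((c i)^{2q}) (real powers) and S(q) = (I + λ R Φ D(q) Φᵀ)⁻¹. Then for every q₀ ≠ 0 the map q ↦ R⁻¹(I − S(q)) is differentiable at q₀ with derivative (1/q₀) · R⁻¹ (I − S(q₀)) · Φ diag(log((c i)^{2q₀})) Φᵀ · S(q₀). -/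
/-!
`S(q) = A(q)⁻¹` with `A(q) = I + λ R Φ D(q) Φᵀ`, which is invertible since
`A(q) = R (R⁻¹ + Φ (λ D(q)) Φᵀ)` is a product of positive definite matrices. Differentiating the
inverse gives `∂S/∂q = -S A' S`, and `I - S = S (A - I)`. As
`∂(c^{2q})/∂q = (1/q) c^{2q} log c^{2q}`, we get `D' = (1/q) D L` with `L = diag(log c^{2q})`,
and `ΦᵀΦ = I` splits `Φ D L Φᵀ = (Φ D Φᵀ)(Φ L Φᵀ)`, which regroups `R⁻¹ S A' S` as claimed.
-/

open Matrix Filter Topology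

attribute [local instance] Matrix.normedAddCommGroup Matrix.normedSpace

section Derivatives

variable {𝕜 : Type*} [NontriviallyNormedField 𝕜] {x : 𝕜}

theorem HasDerivAt.matrix_mul {l m n : Type*} [Fintype m] [Fintype n]
    {A : 𝕜 → Matrix l m 𝕜} {B : 𝕜 → Matrix m n 𝕜} {A' : Matrix l m 𝕜} {B' : Matrix m n 𝕜}
    (hA : HasDerivAt A A' x) (hB : HasDerivAt B B' x) :
    HasDerivAt (fun q => A q * B q) (A' * B x + A x * B') x := by
  refine hasDerivAt_pi.2 fun i => hasDerivAt_pi.2 fun j => ?_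
  simp only [mul_apply, Matrix.add_apply, ← Finset.sum_add_distrib]
  exact HasDerivAt.fun_sum fun k _ =>
    (hasDerivAt_pi.1 (hasDerivAt_pi.1 hA i) k).mul (hasDerivAt_pi.1 (hasDerivAt_pi.1 hB k) j)

theorem HasDerivAt.matrix_diagonal {n : Type*} [Fintype n] [DecidableEq n]
    {d : 𝕜 → n → 𝕜} {d' : n → 𝕜} (hd : HasDerivAt d d' x) :
    HasDerivAt (fun q => diagonal (d q)) (diagonal d') x := by
  refine hasDerivAt_pi.2 fun i => hasDerivAt_pi.2 fun j => ?_
  rcases eq_or_ne i j with rfl | hij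
  · simpa using hasDerivAt_pi.1 hd i
  · simpa [diagonal_apply_ne _ hij] using hasDerivAt_const x (0 : 𝕜)

theorem HasDerivAt.matrix_inv {n : Type*} [Fintype n] [DecidableEq n]
    {A : 𝕜 → Matrix n n 𝕜} {A' : Matrix n n 𝕜}
    (hA : HasDerivAt A A' x) (hdet : IsUnit (A x).det) :
    HasDerivAt (fun q => (A q)⁻¹) (-((A x)⁻¹ * A' * (A x)⁻¹)) x := by
  have hcont : ContinuousAt (fun q => (A q)⁻¹) x :=
    (continuousAt_matrix_inv _ (NormedRing.inverse_continuousAt hdet.unit)).comp hA.continuousAt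
  have hunit : ∀ᶠ q in 𝓝 x, IsUnit (A q).det :=
    ((continuous_id.matrix_det.continuousAt.comp hA.continuousAt).eventually_ne
      hdet.ne_zero).mono fun _ h => h.isUnit
  -- the slope of the inverse is `-(A q)⁻¹ (slope of A) (A x)⁻¹` by the resolvent identity
  refine hasDerivAt_iff_tendsto_slope.2 <| Tendsto.congr' ?_ <|
    (((hcont.tendsto.mono_left nhdsWithin_le_nhds).mul
      (hasDerivAt_iff_tendsto_slope.1 hA)).mul_const (A x)⁻¹).neg
  filter_upwards [nhdsWithin_le_nhds hunit] with q hq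
  simp only [slope_def_module, mul_smul_comm, smul_mul_assoc, ← smul_neg]
  rw [mul_sub, sub_mul, nonsing_inv_mul _ hq, mul_assoc, mul_nonsing_inv _ hdet, one_mul,
    mul_one, neg_sub]

end Derivatives

theorem Real.hasDerivAt_const_rpow_mul {a : ℝ} (ha : 0 < a) (k : ℝ) {q : ℝ} (hq : q ≠ 0) :
    HasDerivAt (fun t => a ^ (k * t)) ((1 / q) * (a ^ (k * q) * Real.log (a ^ (k * q)))) q := by
  refine ((Real.hasStrictDerivAt_const_rpow ha (k * q)).hasDerivAt.comp q
    ((hasDerivAt_id q).const_mul k)).congr_deriv ?_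
  rw [Real.log_rpow ha]
  field_simp

theorem Matrix.PosDef.isUnit_one_add_mul {K n : Type*} [Field K] [PartialOrder K] [StarRing K]
    [StarOrderedRing K] [Fintype n] [DecidableEq n] {R P : Matrix n n K} (hR : R.PosDef)
    (hP : P.PosSemidef) : IsUnit (1 + R * P) := by
  have hfactor : 1 + R * P = R * (R⁻¹ + P) := by
    rw [mul_add, mul_nonsing_inv _ ((isUnit_iff_isUnit_det R).1 hR.isUnit)]
  exact hfactor ▸ hR.isUnit.mul (hR.inv.add_posSemidef hP).isUnit

theorem smoother_deriv_in_q_general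
    (n : ℕ)
    (Φ : Matrix (Fin n) (Fin n) ℝ)
    (hΦ₁ : Φᵀ * Φ = 1)
    (c : Fin n → ℝ) (hc : ∀ i, 0 < c i)
    (R : Matrix (Fin n) (Fin n) ℝ) (hR : R.PosDef)
    (lam : ℝ) (hlam : 0 ≤ lam)
    (S : ℝ → Matrix (Fin n) (Fin n) ℝ)
    (hS : ∀ q : ℝ, S q =
      ((1 : Matrix (Fin n) (Fin n) ℝ) +
        lam • (R * Φ * Matrix.diagonal (fun i => (c i) ^ (2 * q)) * Φᵀ))⁻¹)
    (q₀ : ℝ) (hq₀ : q₀ ≠ 0) :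
    HasDerivAt (fun q => R⁻¹ * (1 - S q))
      ((1 / q₀) • (R⁻¹ * (1 - S q₀) *
        (Φ * Matrix.diagonal (fun i => Real.log ((c i) ^ (2 * q₀))) * Φᵀ) * S q₀)) q₀ := by
  set D : ℝ → Matrix (Fin n) (Fin n) ℝ := fun q => diagonal fun i => c i ^ (2 * q)
  set L := diagonal fun i => Real.log (c i ^ (2 * q₀))
  set A : ℝ → Matrix (Fin n) (Fin n) ℝ := fun q => 1 + lam • (R * Φ * D q * Φᵀ)
  have hSA : S = fun q => (A q)⁻¹ := funext hS
  have hA_unit : IsUnit (A q₀).det := by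
    have hD_nonneg : (D q₀).PosSemidef :=
      posSemidef_diagonal_iff.2 fun i => (Real.rpow_pos_of_pos (hc i) _).le
    have hP : (lam • (Φ * D q₀ * Φᵀ)).PosSemidef :=
      (hD_nonneg.mul_mul_conjTranspose_same Φ).smul hlam
    have := (isUnit_iff_isUnit_det _).1 (hR.isUnit_one_add_mul hP)
    simpa only [A, mul_smul_comm, mul_assoc] using this
  have hD : HasDerivAt D ((1 / q₀) • (D q₀ * L)) q₀ := by
    rw [diagonal_mul_diagonal, ← diagonal_smul]
    exact HasDerivAt.matrix_diagonal <| hasDerivAt_pi.2 fun i =>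
      Real.hasDerivAt_const_rpow_mul (hc i) 2 hq₀
  have hA : HasDerivAt A (lam • (R * Φ * ((1 / q₀) • (D q₀ * L)) * Φᵀ)) q₀ := by
    refine (((((hasDerivAt_const q₀ (R * Φ)).matrix_mul hD).matrix_mul
      (hasDerivAt_const q₀ Φᵀ)).const_smul lam).const_add 1).congr_deriv ?_
    simp only [zero_mul, zero_add, mul_zero, add_zero]
  have hone_sub : 1 - (A q₀)⁻¹ = (A q₀)⁻¹ * (lam • (R * Φ * D q₀ * Φᵀ)) := by
    rw [← add_sub_cancel_left 1 (lam • _), mul_sub, mul_one, nonsing_inv_mul _ hA_unit]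
  rw [hSA]
  convert (hasDerivAt_const q₀ R⁻¹).matrix_mul ((hA.matrix_inv hA_unit).const_sub 1) using 1
  rw [hone_sub]
  simp only [zero_mul, smul_zero, zero_add, neg_neg, smul_mul_assoc, mul_smul_comm, smul_smul,
    mul_assoc]
  rw [← mul_assoc Φᵀ Φ, hΦ₁, one_mul, mul_comm]

/-- Derivative of `R⁻¹(I − S(q))` with respect to the penalty order `q`, where
the penalty eigenvalues are `(c i)^{2q}` (real powers):
`∂{R⁻¹(I − S)}/∂q = (1/q) R⁻¹(I − S) Φ diag{log((c i)^{2q})} Φᵀ S`. -/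
theorem smoother_deriv_in_q
    (n : ℕ) (hn : 0 < n)
    (Φ : Matrix (Fin n) (Fin n) ℝ)
    (hΦ₁ : Φᵀ * Φ = 1) (hΦ₂ : Φ * Φᵀ = 1)
    (c : Fin n → ℝ) (hc : ∀ i, 0 < c i)
    (R : Matrix (Fin n) (Fin n) ℝ) (hR : R.PosDef)
    (lam : ℝ) (hlam : 0 ≤ lam)
    (S : ℝ → Matrix (Fin n) (Fin n) ℝ)
    (hS : ∀ q : ℝ, S q =
      ((1 : Matrix (Fin n) (Fin n) ℝ) +
        lam • (R * Φ * Matrix.diagonal (fun i => (c i) ^ (2 * q)) * Φᵀ))⁻¹)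
    (q₀ : ℝ) (hq₀ : q₀ ≠ 0) :
    HasDerivAt (fun q => R⁻¹ * (1 - S q))
      ((1 / q₀) • (R⁻¹ * (1 - S q₀) *
        (Φ * Matrix.diagonal (fun i => Real.log ((c i) ^ (2 * q₀))) * Φᵀ) * S q₀)) q₀ :=
  smoother_deriv_in_q_general n Φ hΦ₁ c hc R hR lam hlam S hS q₀ hq₀
end

section
/- Let n be a positive integer, A an n×n real symmetric positive semidefinite matrix, λ ≥ 0, and let R : ℝ → (n×n real matrices) be a matrix-valued function that is differentiable at t₀ with derivative R′, such that R(t₀) is symmetric positive definite. Define S(t) = (I + λ R(t) A)⁻¹. Then the map t ↦ R(t)⁻¹ (I − S(t)) is differentiable at t₀ with derivative −(I − S(t₀))ᵀ R(t₀)⁻¹ R′ R(t₀)⁻¹ (I − S(t₀)). -/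
/-!
With `P = λA` one has `R⁻¹(I − (I + R P)⁻¹) = R⁻¹ − (R + R P R)⁻¹` for every `t` (by
`(XY)⁻¹ = Y⁻¹X⁻¹`, which holds for Mathlib's matrix inverse even at singular matrices), so no
local invertibility of `R` is needed. Differentiating the two inverses and using
`(R + RPR)⁻¹ R P = P R (R + RPR)⁻¹ = R⁻¹ − (R + RPR)⁻¹ =: F` gives the derivative `−F R' F`.
`R + RPR` is positive definite, hence invertible, and symmetric like `R`; so `F` is symmetric
and also equals `(I − S)ᵀ R⁻¹`.
-/

open Matrix

attribute [local instance] Matrix.normedAddCommGroup Matrix.normedSpace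

namespace Matrix

section Calculus

variable {𝕜 ι : Type*} [NontriviallyNormedField 𝕜] [Fintype ι] [DecidableEq ι]
  {M N : 𝕜 → Matrix ι ι 𝕜} {M' N' : Matrix ι ι 𝕜} {t : 𝕜}

/- Differentiability only sees the topology, which the entrywise sup norm shares with the
`ℓ∞`-operator norm; the latter makes matrices a normed algebra. -/
theorem hasDerivAt_mul (hM : HasDerivAt M M' t) (hN : HasDerivAt N N' t) :
    HasDerivAt (fun s => M s * N s) (M' * N t + M t * N') t := by
  let _ := Matrix.linftyOpNormedRing (n := ι) (α := 𝕜)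
  let _ := Matrix.linftyOpNormedAlgebra (n := ι) (α := 𝕜) (R := 𝕜)
  exact hM.mul hN

theorem hasDerivAt_inv [CompleteSpace 𝕜] (hM : HasDerivAt M M' t) (hU : IsUnit (M t)) :
    HasDerivAt (fun s => (M s)⁻¹) (-((M t)⁻¹ * M' * (M t)⁻¹)) t := by
  let _ := Matrix.linftyOpNormedRing (n := ι) (α := 𝕜)
  let _ := Matrix.linftyOpNormedAlgebra (n := ι) (α := 𝕜) (R := 𝕜)
  have : HasSummableGeomSeries (Matrix ι ι 𝕜) :=
    @instHasSummableGeomSeriesOfCompleteSpace _ _ (FiniteDimensional.complete 𝕜 _)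
  simp only [nonsing_inv_eq_ringInverse]
  refine ((hasFDerivAt_ringInverse (𝕜 := 𝕜) hU.unit).comp_hasDerivAt t hM).congr_deriv ?_
  simp only [_root_.neg_apply, ContinuousLinearMap.mulLeftRight_apply,
    coe_units_inv, IsUnit.unit_spec, nonsing_inv_eq_ringInverse]

theorem hasDerivAt_inv_sub_inv_add_mul_mul [CompleteSpace 𝕜] {R : 𝕜 → Matrix ι ι 𝕜}
    {R' : Matrix ι ι 𝕜} (P : Matrix ι ι 𝕜) (hR : HasDerivAt R R' t) (hRU : IsUnit (R t))
    (hNU : IsUnit (R t + R t * P * R t)) :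
    HasDerivAt (fun s => (R s)⁻¹ - (R s + R s * P * R s)⁻¹)
      (-(((R t)⁻¹ - (R t + R t * P * R t)⁻¹) * R' * ((R t)⁻¹ - (R t + R t * P * R t)⁻¹))) t := by
  set N := R t + R t * P * R t
  have hN : HasDerivAt (fun s => R s + R s * P * R s) (R' + (R' * P * R t + R t * P * R')) t := by
    refine (hR.add (hasDerivAt_mul (hasDerivAt_mul hR (hasDerivAt_const t P)) hR)).congr_deriv ?_
    rw [mul_zero, add_zero]
  refine ((hasDerivAt_inv hR hRU).sub (hasDerivAt_inv hN hNU)).congr_deriv ?_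
  have hRN : IsUnit (R t) ↔ IsUnit N := iff_of_true hRU hNU
  have left : N⁻¹ * (R t * P) = (R t)⁻¹ - N⁻¹ := by
    rw [← neg_sub, inv_sub_inv hRN.symm]
    simp only [N, sub_add_cancel_left, neg_mul, mul_neg, neg_neg, mul_assoc,
      mul_nonsing_inv _ ((isUnit_iff_isUnit_det _).1 hRU), mul_one]
  have right : P * R t * N⁻¹ = (R t)⁻¹ - N⁻¹ := by
    rw [inv_sub_inv hRN]
    simp only [N, add_sub_cancel_left, ← mul_assoc,
      nonsing_inv_mul _ ((isUnit_iff_isUnit_det _).1 hRU), one_mul]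
  have expand : N⁻¹ * (R' + (R' * P * R t + R t * P * R')) * N⁻¹ =
      N⁻¹ * R' * N⁻¹ + N⁻¹ * R' * (P * R t * N⁻¹) + N⁻¹ * (R t * P) * R' * N⁻¹ := by
    noncomm_ring
  rw [expand, left, right]
  noncomm_ring

end Calculus

section Positivity

variable {ι α : Type*} [Fintype ι] [Ring α] [PartialOrder α] [StarRing α] [AddLeftMono α]

theorem PosDef.add_mul_mul_self {R P : Matrix ι ι α} (hR : R.PosDef) (hP : P.PosSemidef) :
    (R + R * P * R).PosDef :=
  hR.add_posSemidef (by simpa only [hR.isHermitian.eq] using hP.conjTranspose_mul_mul_same R)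

end Positivity

theorem inv_mul_one_sub_inv_one_add_mul {ι α : Type*} [Fintype ι] [DecidableEq ι] [CommRing α]
    (R P : Matrix ι ι α) : R⁻¹ * (1 - (1 + R * P)⁻¹) = R⁻¹ - (R + R * P * R)⁻¹ := by
  rw [mul_sub, mul_one, ← mul_inv_rev, add_mul, one_mul]

end Matrix

theorem smoother_deriv_in_R_general
    (n : ℕ)
    (A : Matrix (Fin n) (Fin n) ℝ) (hA : A.PosSemidef)
    (lam : ℝ) (hlam : 0 ≤ lam)
    (R : ℝ → Matrix (Fin n) (Fin n) ℝ)
    (R' : Matrix (Fin n) (Fin n) ℝ)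
    (t₀ : ℝ)
    (hRdiff : HasDerivAt R R' t₀)
    (hRpos : (R t₀).PosDef)
    (S : ℝ → Matrix (Fin n) (Fin n) ℝ)
    (hS : ∀ t : ℝ, S t = ((1 : Matrix (Fin n) (Fin n) ℝ) + lam • (R t * A))⁻¹) :
    HasDerivAt (fun t => (R t)⁻¹ * (1 - S t))
      (-((1 - S t₀)ᵀ * (R t₀)⁻¹ * R' * (R t₀)⁻¹ * (1 - S t₀))) t₀ := by
  have hN : (R t₀ + R t₀ * (lam • A) * R t₀).PosDef := hRpos.add_mul_mul_self (hA.smul hlam)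
  have hf : (fun t => (R t)⁻¹ * (1 - S t)) =
      fun t => (R t)⁻¹ - (R t + R t * (lam • A) * R t)⁻¹ := by
    funext t
    rw [hS, ← Matrix.mul_smul, inv_mul_one_sub_inv_one_add_mul]
  have right : (R t₀)⁻¹ * (1 - S t₀) = (R t₀)⁻¹ - (R t₀ + R t₀ * (lam • A) * R t₀)⁻¹ :=
    congrFun hf t₀
  have left : (1 - S t₀)ᵀ * (R t₀)⁻¹ = (R t₀)⁻¹ - (R t₀ + R t₀ * (lam • A) * R t₀)⁻¹ := by
    have hRinv := hRpos.isHermitian.inv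
    have hF := hRinv.sub hN.isHermitian.inv
    rw [IsHermitian, conjTranspose_eq_transpose_of_trivial] at hRinv hF
    simpa only [transpose_mul, hRinv, hF] using congrArg transpose right
  rw [hf, Matrix.mul_assoc _ (R t₀)⁻¹ (1 - S t₀), right, left]
  exact hasDerivAt_inv_sub_inv_add_mul_mul _ hRdiff hRpos.isUnit hN.isUnit

/-- Derivative of `R(t)⁻¹(I − S(t))` along a differentiable path of working
correlation matrices:
`∂{R⁻¹(I−S)} = −(I − S)ᵀ R⁻¹ R′ R⁻¹ (I − S)`. -/
theorem smoother_deriv_in_R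
    (n : ℕ) (hn : 0 < n)
    (A : Matrix (Fin n) (Fin n) ℝ) (hA : A.PosSemidef)
    (lam : ℝ) (hlam : 0 ≤ lam)
    (R : ℝ → Matrix (Fin n) (Fin n) ℝ)
    (R' : Matrix (Fin n) (Fin n) ℝ)
    (t₀ : ℝ)
    (hRdiff : HasDerivAt R R' t₀)
    (hRpos : (R t₀).PosDef)
    (S : ℝ → Matrix (Fin n) (Fin n) ℝ)
    (hS : ∀ t : ℝ, S t = ((1 : Matrix (Fin n) (Fin n) ℝ) + lam • (R t * A))⁻¹) :
    HasDerivAt (fun t => (R t)⁻¹ * (1 - S t))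
      (-((1 - S t₀)ᵀ * (R t₀)⁻¹ * R' * (R t₀)⁻¹ * (1 - S t₀))) t₀ :=
  smoother_deriv_in_R_general n A hA lam hlam R R' t₀ hRdiff hRpos S hS
end

section
/- Let n be a positive integer, Φ an n×n real orthogonal matrix, d : Fin n → ℝ with d i ≥ 0, ρ : Fin n → ℝ with ρ i > 0, R an n×n real symmetric positive definite matrix and λ ≥ 0. Define S = (I + λ R Φ diag(d) Φᵀ)⁻¹, the approximating smoother S* = Φ (I + λ diag(d ∘ ρ))⁻¹ Φᵀ (where d ∘ ρ is the entrywise product), and the perturbation matrix Δ = R Φ diag(ρ)⁻¹ Φᵀ − I. Then S (I + Δ) = (I + S Δ) S*. -/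
open Matrix

/-!
Put `A = 1 + λ R Φ diag(d) Φᵀ`, so `S = A⁻¹`; `A = R (R⁻¹ + λ Φ diag(d) Φᵀ)` is invertible
since the second factor is positive definite. Then `1 + S Δ = S (A + Δ)`, and the identity
reduces to `(A + Δ) S* = 1 + Δ`. Since `Φᵀ Φ = 1`, both `A + Δ = R Φ diag(λ d + ρ⁻¹) Φᵀ` and
`S* = Φ diag((1 + λ d ρ)⁻¹) Φᵀ` multiply as diagonals, and
`(λ d + ρ⁻¹) (1 + λ d ρ)⁻¹ = ρ⁻¹`.
-/

theorem add_inv_mul_inv_one_add_mul {K : Type*} [Field K] {c ρ : K} (hρ : ρ ≠ 0)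
    (h : 1 + c * ρ ≠ 0) : (c + ρ⁻¹) * (1 + c * ρ)⁻¹ = ρ⁻¹ := by
  rw [show c + ρ⁻¹ = (1 + c * ρ) * ρ⁻¹ by field_simp; ring, mul_right_comm, mul_inv_cancel₀ h,
    one_mul]

namespace Matrix

variable {ι α : Type*} [DecidableEq ι]

theorem one_add_smul_diagonal [Semiring α] (c : α) (v : ι → α) :
    1 + c • diagonal v = diagonal fun i => 1 + c * v i := by
  rw [← diagonal_smul, ← diagonal_one, diagonal_add]
  rfl

variable [Fintype ι]

theorem inv_diagonal_of_ne_zero {K : Type*} [Field K] {v : ι → K} (hv : ∀ i, v i ≠ 0) :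
    (diagonal v)⁻¹ = diagonal fun i => (v i)⁻¹ := by
  refine inv_eq_right_inv ?_
  rw [diagonal_mul_diagonal, ← diagonal_one]
  exact congrArg diagonal (funext fun i => mul_inv_cancel₀ (hv i))

theorem mul_conj_diagonal_mul_conj_diagonal [Semiring α] {Φ Ψ : Matrix ι ι α}
    (h : Ψ * Φ = 1) (X : Matrix ι ι α) (a b : ι → α) :
    X * Φ * diagonal a * Ψ * (Φ * diagonal b * Ψ) =
      X * Φ * diagonal (fun i => a i * b i) * Ψ := by
  rw [← diagonal_mul_diagonal]
  simp only [Matrix.mul_assoc]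
  rw [← Matrix.mul_assoc Ψ, h, Matrix.one_mul]

theorem PosDef.isUnit_one_add_mul_s8 {K : Type*} [Field K] [PartialOrder K] [StarRing K]
    [AddLeftMono K] {R P : Matrix ι ι K} (hR : R.PosDef) (hP : P.PosSemidef) :
    IsUnit (1 + R * P) := by
  have : 1 + R * P = R * (R⁻¹ + P) := by
    rw [Matrix.mul_add, mul_nonsing_inv R ((isUnit_iff_isUnit_det R).mp hR.isUnit)]
  rw [this]
  exact hR.isUnit.mul (hR.inv.add_posSemidef hP).isUnit

end Matrix

theorem smoother_perturbation_identity_general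
    (n : ℕ)
    (Φ : Matrix (Fin n) (Fin n) ℝ)
    (hΦ₁ : Φᵀ * Φ = 1)
    (d : Fin n → ℝ) (hd : ∀ i, 0 ≤ d i)
    (ρ : Fin n → ℝ) (hρ : ∀ i, 0 < ρ i)
    (R : Matrix (Fin n) (Fin n) ℝ) (hR : R.PosDef)
    (lam : ℝ) (hlam : 0 ≤ lam)
    (S Sstar Δ : Matrix (Fin n) (Fin n) ℝ)
    (hS : S = ((1 : Matrix (Fin n) (Fin n) ℝ) + lam • (R * Φ * Matrix.diagonal d * Φᵀ))⁻¹)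
    (hSstar : Sstar =
      Φ * ((1 : Matrix (Fin n) (Fin n) ℝ) + lam • Matrix.diagonal (fun i => d i * ρ i))⁻¹ * Φᵀ)
    (hΔ : Δ = R * Φ * Matrix.diagonal (fun i => (ρ i)⁻¹) * Φᵀ - 1) :
    S * (1 + Δ) = (1 + S * Δ) * Sstar := by
  set A := (1 : Matrix (Fin n) (Fin n) ℝ) + lam • (R * Φ * diagonal d * Φᵀ) with hA
  have hSA : S * A = 1 := by
    have hP : (Φ * diagonal (lam • d) * Φᵀ).PosSemidef :=
      (posSemidef_diagonal_iff.mpr fun i => mul_nonneg hlam (hd i)).mul_mul_conjTranspose_same Φ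
    have hA' : A = 1 + R * (Φ * diagonal (lam • d) * Φᵀ) := by
      simp only [hA, diagonal_smul, Matrix.smul_mul, Matrix.mul_smul, Matrix.mul_assoc]
    rw [hS, nonsing_inv_mul]
    exact (isUnit_iff_isUnit_det A).mp (hA' ▸ hR.isUnit_one_add_mul_s8 hP)
  have hpos i : 0 < 1 + lam * (d i * ρ i) :=
    add_pos_of_pos_of_nonneg one_pos (mul_nonneg hlam (mul_nonneg (hd i) (hρ i).le))
  have hSstar' : Sstar = Φ * diagonal (fun i => (1 + lam * (d i * ρ i))⁻¹) * Φᵀ := by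
    rw [hSstar, one_add_smul_diagonal, inv_diagonal_of_ne_zero fun i => (hpos i).ne']
  have hAΔ : A + Δ = R * Φ * diagonal (fun i => lam * d i + (ρ i)⁻¹) * Φᵀ := by
    have hsplit : diagonal (fun i => lam * d i + (ρ i)⁻¹) =
        lam • diagonal d + diagonal fun i => (ρ i)⁻¹ := by
      rw [← diagonal_smul, diagonal_add]
      rfl
    rw [hA, hΔ, hsplit, Matrix.mul_add, Matrix.add_mul, Matrix.mul_smul, Matrix.smul_mul]
    abel
  have hkey : (A + Δ) * Sstar = 1 + Δ := by
    rw [hAΔ, hSstar', mul_conj_diagonal_mul_conj_diagonal hΦ₁, hΔ, add_sub_cancel]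
    congr 3
    funext i
    rw [← mul_assoc]
    exact add_inv_mul_inv_one_add_mul (hρ i).ne' (mul_assoc lam _ _ ▸ (hpos i).ne')
  calc S * (1 + Δ) = S * ((A + Δ) * Sstar) := by rw [hkey]
    _ = (1 + S * Δ) * Sstar := by rw [← Matrix.mul_assoc, Matrix.mul_add, hSA]

/-- The key perturbation identity (B.10): `S (I + Δ) = (I + S Δ) S*`, where
`S*` is the exactly diagonalizable approximation of the smoother and
`Δ = R Φ diag(ρ)⁻¹ Φᵀ − I` is the perturbation matrix. -/
theorem smoother_perturbation_identity
    (n : ℕ) (hn : 0 < n)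
    (Φ : Matrix (Fin n) (Fin n) ℝ)
    (hΦ₁ : Φᵀ * Φ = 1) (hΦ₂ : Φ * Φᵀ = 1)
    (d : Fin n → ℝ) (hd : ∀ i, 0 ≤ d i)
    (ρ : Fin n → ℝ) (hρ : ∀ i, 0 < ρ i)
    (R : Matrix (Fin n) (Fin n) ℝ) (hR : R.PosDef)
    (lam : ℝ) (hlam : 0 ≤ lam)
    (S Sstar Δ : Matrix (Fin n) (Fin n) ℝ)
    (hS : S = ((1 : Matrix (Fin n) (Fin n) ℝ) + lam • (R * Φ * Matrix.diagonal d * Φᵀ))⁻¹)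
    (hSstar : Sstar =
      Φ * ((1 : Matrix (Fin n) (Fin n) ℝ) + lam • Matrix.diagonal (fun i => d i * ρ i))⁻¹ * Φᵀ)
    (hΔ : Δ = R * Φ * Matrix.diagonal (fun i => (ρ i)⁻¹) * Φᵀ - 1) :
    S * (1 + Δ) = (1 + S * Δ) * Sstar :=
  smoother_perturbation_identity_general n Φ hΦ₁ d hd ρ hρ R hR lam hlam S Sstar Δ hS hSstar hΔ
end
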